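/- arXiv:1702.08258 — 4 statements merged into one kernel-verified Lean document; each statement's English description precedes it below -/
import Mathlib

section
/- Let m, m_t, m_r be positive integers with m_t ≤ m_r and m_t + m_r ≤ m. Then for every s ≥ 0, the ergodic capacity of the MIMO Jacobi fading channel satisfies the upper bound E[ln det(I_{m_t} + s·HᴴH)] ≤ m_t · ln(1 + s·m_r/m), where the expectation is over the Haar probability measure on the unitary group U(m). -/
open MeasureTheory Matrix

/-- Borel measurable-space structure on the unitary group `U(m)`. -/
noncomputable instance (m : ℕ) : MeasurableSpace (Matrix.unitaryGroup (Fin m) ℂ) := borel _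

instance (m : ℕ) : BorelSpace (Matrix.unitaryGroup (Fin m) ℂ) := ⟨rfl⟩

/-- The MIMO Jacobi fading channel matrix: the upper-left `mr × mt` block of a
unitary `m × m` matrix `U`. -/
noncomputable def jacobiH (m mt mr : ℕ) (hr : mr ≤ m) (ht : mt ≤ m)
    (U : Matrix.unitaryGroup (Fin m) ℂ) : Matrix (Fin mr) (Fin mt) ℂ :=
  (U : Matrix (Fin m) (Fin m) ℂ).submatrix (Fin.castLE hr) (Fin.castLE ht)

/-- The ergodic capacity `E[ln det (I + s · Hᴴ H)]` of the MIMO Jacobi fading channel,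
the expectation being taken with respect to the measure `μ` on the unitary group. -/
noncomputable def ergodicCapacity (m mt mr : ℕ) (hr : mr ≤ m) (ht : mt ≤ m) (s : ℝ)
    (μ : Measure (Matrix.unitaryGroup (Fin m) ℂ)) : ℝ :=
  ∫ U, Real.log ((Matrix.det ((1 : Matrix (Fin mt) (Fin mt) ℂ) +
      (s : ℂ) • ((jacobiH m mt mr hr ht U)ᴴ * jacobiH m mt mr hr ht U))).re) ∂μ

/-!
For every eigenvalue `λ > 0` of `A = 1 + s HᴴH`, the tangent line of `ln` at `c` gives
`ln λ ≤ ln c + λ / c - 1`, hence `ln det A ≤ mt (ln c - 1) + tr A / c` pointwise, with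
`tr A = mt + s ∑ |H_ij|²`. Left invariance of Haar measure under permutation matrices makes
`E |U_ij|²` independent of `i`, and the columns of `U` are unit vectors, so `E |U_ij|² = 1 / m`
and `E tr A = mt + s mt mr / m`. For `c = 1 + s mr / m` the bound integrates to `mt ln c`.
-/

open scoped ComplexOrder

lemma Real.log_le_log_add_div_sub_one {x c : ℝ} (hx : 0 < x) (hc : 0 < c) :
    Real.log x ≤ Real.log c + x / c - 1 := by
  have h := Real.log_le_sub_one_of_pos (div_pos hx hc)
  rw [Real.log_div hx.ne' hc.ne'] at h
  linarith

lemma Continuous.integrable_of_compactSpace {X E : Type*} [TopologicalSpace X] [CompactSpace X]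
    [MeasurableSpace X] [OpensMeasurableSpace X] [NormedAddCommGroup E] {f : X → E}
    (hf : Continuous f) (μ : Measure X) [IsFiniteMeasure μ] : Integrable f μ :=
  hf.integrable_of_hasCompactSupport (.of_compactSpace f)

namespace Matrix

variable {𝕜 n p q : Type*} [RCLike 𝕜] [Fintype n] [DecidableEq n]

lemma conjTranspose_mul_self_apply_self [Fintype p] (A : Matrix p q 𝕜) (j : q) :
    (Aᴴ * A) j j = ∑ i, (‖A i j‖ ^ 2 : 𝕜) := by
  simp [mul_apply, RCLike.conj_mul]

lemma re_trace_conjTranspose_mul_self [Fintype p] [Fintype q] (A : Matrix p q 𝕜) :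
    RCLike.re (Aᴴ * A).trace = ∑ j, ∑ i, ‖A i j‖ ^ 2 := by
  simp only [trace, diag_apply, conjTranspose_mul_self_apply_self, map_sum]
  norm_cast

lemma sum_norm_sq_apply_of_mem_unitaryGroup {U : Matrix n n 𝕜} (hU : U ∈ unitaryGroup n 𝕜)
    (j : n) : ∑ i, ‖U i j‖ ^ 2 = 1 := by
  have h := congrFun (congrFun (mem_unitaryGroup_iff'.mp hU) j) j
  rw [star_eq_conjTranspose, conjTranspose_mul_self_apply_self, one_apply_eq] at h
  exact_mod_cast h

lemma permMatrix_mem_unitaryGroup (σ : Equiv.Perm n) : σ.permMatrix 𝕜 ∈ unitaryGroup n 𝕜 := by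
  rw [mem_unitaryGroup_iff, star_eq_conjTranspose, conjTranspose_permMatrix, ← permMatrix_mul,
    inv_mul_cancel, permMatrix_one]

lemma PosDef.re_det_pos {A : Matrix n n 𝕜} (hA : A.PosDef) : 0 < RCLike.re A.det :=
  (RCLike.pos_iff.mp hA.det_pos).1

lemma PosDef.log_re_det_le {A : Matrix n n 𝕜} (hA : A.PosDef) {c : ℝ} (hc : 0 < c) :
    Real.log (RCLike.re A.det) ≤ Fintype.card n * (Real.log c - 1) + RCLike.re A.trace / c := by
  set ev := hA.isHermitian.eigenvalues
  have hdet : RCLike.re A.det = ∏ i, ev i := by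
    rw [hA.isHermitian.det_eq_prod_eigenvalues, ← RCLike.ofReal_prod, RCLike.ofReal_re]
  have htrace : RCLike.re A.trace = ∑ i, ev i := by
    rw [hA.isHermitian.trace_eq_sum_eigenvalues, ← RCLike.ofReal_sum, RCLike.ofReal_re]
  calc Real.log (RCLike.re A.det) = ∑ i, Real.log (ev i) := by
        rw [hdet, Real.log_prod fun i _ => (hA.eigenvalues_pos i).ne']
    _ ≤ ∑ i, (Real.log c + ev i / c - 1) :=
        Finset.sum_le_sum fun i _ => Real.log_le_log_add_div_sub_one (hA.eigenvalues_pos i) hc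
    _ = Fintype.card n * (Real.log c - 1) + RCLike.re A.trace / c := by
        rw [htrace, Finset.sum_div, ← Finset.card_univ]
        simp only [Finset.sum_sub_distrib, Finset.sum_add_distrib, Finset.sum_const, nsmul_eq_mul]
        ring

lemma posDef_one_add_smul_conjTranspose_mul_self [Fintype p] (H : Matrix p n 𝕜) {s : ℝ}
    (hs : 0 ≤ s) : (1 + (s : 𝕜) • (Hᴴ * H)).PosDef :=
  PosDef.one.add_posSemidef
    ((posSemidef_conjTranspose_mul_self H).smul (RCLike.ofReal_nonneg.mpr hs))

lemma log_re_det_one_add_smul_conjTranspose_mul_self_le [Fintype p] (H : Matrix p n 𝕜)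
    {s c : ℝ} (hs : 0 ≤ s) (hc : 0 < c) :
    Real.log (RCLike.re (1 + (s : 𝕜) • (Hᴴ * H)).det)
      ≤ Fintype.card n * (Real.log c - 1) + (Fintype.card n + s * ∑ j, ∑ i, ‖H i j‖ ^ 2) / c := by
  have h := (posDef_one_add_smul_conjTranspose_mul_self H hs).log_re_det_le hc
  rwa [trace_add, trace_one, trace_smul, map_add, smul_eq_mul, RCLike.re_ofReal_mul,
    re_trace_conjTranspose_mul_self, RCLike.natCast_re] at h

namespace UnitaryGroup

instance : CompactSpace (unitaryGroup n 𝕜) := by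
  refine (isCompact_iff_compactSpace (s := (unitaryGroup n 𝕜 : Set (Matrix n n 𝕜)))).mp ?_
  refine (isCompact_univ_pi fun _ => isCompact_univ_pi fun _ =>
    isCompact_closedBall (0 : 𝕜) 1).of_isClosed_subset ?_ ?_
  · rw [show (unitaryGroup n 𝕜 : Set (Matrix n n 𝕜)) = {U | U * star U = 1} from
      Set.ext fun _ => mem_unitaryGroup_iff]
    exact isClosed_eq (continuous_id.matrix_mul continuous_star) continuous_const
  · intro U hU i _ j _
    simpa using entry_norm_bound_of_unitary hU i j

@[fun_prop]
lemma continuous_apply (i j : n) : Continuous fun U : unitaryGroup n 𝕜 => (U : Matrix n n 𝕜) i j :=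
  (continuous_apply_apply i j).comp continuous_subtype_val

variable [MeasurableSpace (unitaryGroup n 𝕜)] [BorelSpace (unitaryGroup n 𝕜)]
  (μ : Measure (unitaryGroup n 𝕜)) [μ.IsMulLeftInvariant]

lemma integral_norm_sq_apply_eq (i i' j : n) :
    ∫ U : unitaryGroup n 𝕜, ‖(U : Matrix n n 𝕜) i j‖ ^ 2 ∂μ
      = ∫ U : unitaryGroup n 𝕜, ‖(U : Matrix n n 𝕜) i' j‖ ^ 2 ∂μ := by
  let σ : unitaryGroup n 𝕜 := ⟨_, permMatrix_mem_unitaryGroup (Equiv.swap i i')⟩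
  rw [← integral_mul_left_eq_self _ σ]
  simp [σ, PEquiv.toMatrix_toPEquiv_mul]

variable [IsProbabilityMeasure μ]

lemma integral_norm_sq_apply (i j : n) :
    ∫ U : unitaryGroup n 𝕜, ‖(U : Matrix n n 𝕜) i j‖ ^ 2 ∂μ = 1 / Fintype.card n := by
  have : Nonempty n := ⟨i⟩
  have hcard : (Fintype.card n : ℝ) ≠ 0 := Nat.cast_ne_zero.mpr Fintype.card_ne_zero
  have hsum : ∑ i', ∫ U : unitaryGroup n 𝕜, ‖(U : Matrix n n 𝕜) i' j‖ ^ 2 ∂μ = 1 := by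
    rw [← integral_finsetSum _ fun i' _ =>
      (by fun_prop : Continuous _).integrable_of_compactSpace μ]
    simp [sum_norm_sq_apply_of_mem_unitaryGroup (SetLike.coe_mem _)]
  rw [Finset.sum_congr rfl fun i' _ => integral_norm_sq_apply_eq μ i' i j, Finset.sum_const,
    Finset.card_univ, nsmul_eq_mul] at hsum
  rw [eq_div_iff hcard, mul_comm, hsum]

lemma integral_sum_sum_norm_sq_apply [Fintype p] [Fintype q] (r : p → n) (c : q → n) :
    ∫ U : unitaryGroup n 𝕜, ∑ j, ∑ i, ‖(U : Matrix n n 𝕜) (r i) (c j)‖ ^ 2 ∂μ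
      = Fintype.card q * Fintype.card p / Fintype.card n := by
  have hcol (j : q) : ∫ U : unitaryGroup n 𝕜, ∑ i, ‖(U : Matrix n n 𝕜) (r i) (c j)‖ ^ 2 ∂μ
      = Fintype.card p / Fintype.card n := by
    rw [integral_finsetSum _ fun i _ => (by fun_prop : Continuous _).integrable_of_compactSpace μ]
    simp [integral_norm_sq_apply, div_eq_mul_inv]
  rw [integral_finsetSum _ fun j _ => (by fun_prop : Continuous _).integrable_of_compactSpace μ]
  simp [hcol, mul_div_assoc]

end UnitaryGroup

end Matrix

theorem jacobi_ergodic_capacity_upper_bound_general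
    (m mt mr : ℕ) (h2 : mt + mr ≤ m)
    (μ : Measure (Matrix.unitaryGroup (Fin m) ℂ))
    [μ.IsHaarMeasure] [IsProbabilityMeasure μ]
    (s : ℝ) (hs : 0 ≤ s) :
    ergodicCapacity m mt mr (le_trans (Nat.le_add_left mr mt) h2)
        (le_trans (Nat.le_add_right mt mr) h2) s μ
      ≤ mt * Real.log (1 + s * mr / m) := by
  set hr := le_trans (Nat.le_add_left mr mt) h2
  set ht := le_trans (Nat.le_add_right mt mr) h2
  set c : ℝ := 1 + s * mr / m
  have hc : 0 < c := by positivity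
  have hint {f : unitaryGroup (Fin m) ℂ → ℝ} (hf : Continuous f) : Integrable f μ :=
    hf.integrable_of_compactSpace μ
  let frobSq (U : unitaryGroup (Fin m) ℂ) : ℝ :=
    ∑ j, ∑ i, ‖(U : Matrix (Fin m) (Fin m) ℂ) (Fin.castLE hr i) (Fin.castLE ht j)‖ ^ 2
  have hfrobSq : ∫ U, frobSq U ∂μ = mt * mr / m := by
    simpa using UnitaryGroup.integral_sum_sum_norm_sq_apply μ (Fin.castLE hr) (Fin.castLE ht)
  have hdet_cont : Continuous fun U : unitaryGroup (Fin m) ℂ =>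
      RCLike.re (1 + (s : ℂ) • ((jacobiH m mt mr hr ht U)ᴴ * jacobiH m mt mr hr ht U)).det := by
    unfold jacobiH; fun_prop
  have hdet_pos (U : unitaryGroup (Fin m) ℂ) :=
    (posDef_one_add_smul_conjTranspose_mul_self (jacobiH m mt mr hr ht U) hs).re_det_pos
  calc ergodicCapacity m mt mr hr ht s μ
      ≤ ∫ U, (mt * (Real.log c - 1) + (mt + s * frobSq U) / c) ∂μ :=
        integral_mono (hint (hdet_cont.log fun U => (hdet_pos U).ne')) (hint (by fun_prop))
          fun U => by simpa [jacobiH] using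
            log_re_det_one_add_smul_conjTranspose_mul_self_le (jacobiH m mt mr hr ht U) hs hc
    _ = mt * (Real.log c - 1) + (mt + s * (mt * mr / m)) / c := by
        rw [integral_add (integrable_const _) (hint (by fun_prop)), integral_div,
          integral_add (integrable_const _) (hint (by fun_prop)), integral_const_mul s, hfrobSq]
        simp
    _ = mt * Real.log c := by
        rw [show (mt : ℝ) + s * (mt * mr / m) = mt * c by ring, mul_div_cancel_right₀ _ hc.ne']
        ring

/-- **Upper bound on the ergodic capacity of the MIMO Jacobi fading channel.**
If `mt ≤ mr` and `mt + mr ≤ m`, then for every SNR `s ≥ 0`,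
`E[ln det (I + s · Hᴴ H)] ≤ mt · ln (1 + s · mr / m)`, the expectation being over
the Haar probability measure on the unitary group `U(m)`. -/
theorem jacobi_ergodic_capacity_upper_bound
    (m mt mr : ℕ) (hm : 0 < m) (hmt : 0 < mt) (hmr : 0 < mr)
    (h1 : mt ≤ mr) (h2 : mt + mr ≤ m)
    (μ : Measure (Matrix.unitaryGroup (Fin m) ℂ))
    [μ.IsHaarMeasure] [IsProbabilityMeasure μ]
    (s : ℝ) (hs : 0 ≤ s) :
    ergodicCapacity m mt mr (le_trans (Nat.le_add_left mr mt) h2)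
        (le_trans (Nat.le_add_right mt mr) h2) s μ
      ≤ mt * Real.log (1 + s * mr / m) :=
  jacobi_ergodic_capacity_upper_bound_general m mt mr h2 μ s hs
end

section
/- Let m, m_t, m_r be positive integers with m_t ≤ m, m_r ≤ m and m_t + m_r > m. Let U be Haar distributed on U(m), let H be the upper-left m_r×m_t block of U, and let H' be the lower-right (m−m_t)×(m−m_r) block of U. Then for every s ≥ 0, E[ln det(I_{m_t} + s·HᴴH)] = (m_t + m_r − m)·ln(1 + s) + E[ln det(I_{m−m_r} + s·H'ᴴH')], where both expectations are over the Haar probability measure on U(m). -/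
/-!
Split the unitary `U` into blocks `H` (rows `< mr`, columns `< mt`), `F` (rows `≥ mr`,
columns `< mt`) and `D` (rows `≥ mr`, columns `≥ mt`). Orthonormality of the columns and of
the rows of `U` gives `HᴴH + FᴴF = 1` and `FFᴴ + DDᴴ = 1`, so `1 + s HᴴH = (1 + s) - s FᴴF`
and `1 + s DDᴴ = (1 + s) - s FFᴴ`. Sylvester's identity for `FᴴF` and `FFᴴ` (of sizes `mt`
and `m - mr`) then gives, pointwise,
`(1 + s)^(m - mr) det (1 + s HᴴH) = (1 + s)^mt det (1 + s DDᴴ)`.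
Finally `D(U) = H'(U⁻¹)ᴴ`, and a left-invariant probability measure is invariant under
inversion, so `log det (1 + s DDᴴ)` and `log det (1 + s H'ᴴH')` have the same expectation.
-/

open MeasureTheory Matrix

/-- The lower-right `(m − mt) × (m − mr)` block of a unitary `m × m` matrix `U`,
i.e. the submatrix on rows `mt, …, m−1` and columns `mr, …, m−1`. -/
noncomputable def jacobiH' (m mt mr : ℕ) (U : Matrix.unitaryGroup (Fin m) ℂ) :
    Matrix (Fin (m - mt)) (Fin (m - mr)) ℂ :=
  fun i j => (U : Matrix (Fin m) (Fin m) ℂ)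
    ⟨mt + i.1, by have := i.2; omega⟩ ⟨mr + j.1, by have := j.2; omega⟩

def Fin.natAddSub (k : ℕ) {m : ℕ} (i : Fin (m - k)) : Fin m :=
  ⟨k + i, by have := i.isLt; omega⟩

theorem Fin.natAddSub_injective (k : ℕ) {m : ℕ} :
    (Fin.natAddSub k : Fin (m - k) → Fin m).Injective := fun _ _ h =>
  Fin.ext (Nat.add_left_cancel (congrArg Fin.val h))

theorem Fin.sum_univ_eq_sum_castLE_add_sum_natAddSub {M : Type*} [AddCommMonoid M] {k m : ℕ}
    (hk : k ≤ m) (f : Fin m → M) :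
    ∑ i, f i = ∑ i : Fin k, f (Fin.castLE hk i) + ∑ i : Fin (m - k), f (Fin.natAddSub k i) := by
  rw [← (finCongr (Nat.add_sub_of_le hk)).sum_comp f, Fin.sum_univ_add]
  rfl

namespace Matrix

section BlockSplit

variable {α : Type*} {l o : Type*} {k m : ℕ}

theorem mul_eq_add_castLE_natAddSub [NonUnitalNonAssocSemiring α] (hk : k ≤ m)
    (A : Matrix l (Fin m) α) (B : Matrix (Fin m) o α) :
    A * B = A.submatrix id (Fin.castLE hk) * B.submatrix (Fin.castLE hk) id +
      A.submatrix id (Fin.natAddSub k) * B.submatrix (Fin.natAddSub k) id := by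
  ext i j
  exact Fin.sum_univ_eq_sum_castLE_add_sum_natAddSub hk _

variable [Semiring α] [StarRing α] [DecidableEq o]

theorem conjTranspose_mul_self_castLE_add_natAddSub_eq_one (hk : k ≤ m)
    {U : Matrix (Fin m) (Fin m) α} (hU : Uᴴ * U = 1) {c : o → Fin m} (hc : c.Injective) :
    (U.submatrix (Fin.castLE hk) c)ᴴ * U.submatrix (Fin.castLE hk) c +
      (U.submatrix (Fin.natAddSub k) c)ᴴ * U.submatrix (Fin.natAddSub k) c = 1 := by
  have hsplit := mul_eq_add_castLE_natAddSub hk (Uᴴ.submatrix c id) (U.submatrix id c)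
  rw [← submatrix_mul _ _ _ _ _ Function.bijective_id, hU, submatrix_one c hc] at hsplit
  simpa only [submatrix_submatrix, Function.comp_id, Function.id_comp, conjTranspose_submatrix]
    using hsplit.symm

theorem mul_conjTranspose_self_castLE_add_natAddSub_eq_one (hk : k ≤ m)
    {U : Matrix (Fin m) (Fin m) α} (hU : U * Uᴴ = 1) {r : o → Fin m} (hr : r.Injective) :
    U.submatrix r (Fin.castLE hk) * (U.submatrix r (Fin.castLE hk))ᴴ +
      U.submatrix r (Fin.natAddSub k) * (U.submatrix r (Fin.natAddSub k))ᴴ = 1 := by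
  simpa only [conjTranspose_submatrix, conjTranspose_conjTranspose] using
    conjTranspose_mul_self_castLE_add_natAddSub_eq_one hk (U := Uᴴ)
      (by rwa [conjTranspose_conjTranspose]) hr

end BlockSplit

section Determinant

variable {K : Type*} [Field K] {n p q r : Type*} [Fintype n] [DecidableEq n] [Fintype p]
  [Fintype q] [DecidableEq q]

theorem pow_mul_det_smul_one_add_mul_comm [DecidableEq p] {x : K} (hx : x ≠ 0)
    (A : Matrix p n K) (B : Matrix n p K) :
    x ^ Fintype.card n * det (x • 1 + A * B) = x ^ Fintype.card p * det (x • 1 + B * A) := by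
  have hAB : x • 1 + A * B = x • (1 + x⁻¹ • A * B) := by
    rw [smul_add, Matrix.smul_mul, smul_inv_smul₀ hx]
  have hBA : x • 1 + B * A = x • (1 + B * x⁻¹ • A) := by
    rw [smul_add, Matrix.mul_smul, smul_inv_smul₀ hx]
  rw [hAB, hBA, det_smul, det_smul, det_one_add_mul_comm]
  ring

theorem pow_mul_det_one_add_smul_mul_eq [Fintype r] (A' : Matrix n p K) (A : Matrix p n K)
    (F' : Matrix n q K) (F : Matrix q n K) (D : Matrix q r K) (D' : Matrix r q K)
    (hA : A' * A + F' * F = 1) (hD : F * F' + D * D' = 1) {s : K} (hs : 1 + s ≠ 0) :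
    (1 + s) ^ Fintype.card q * det (1 + s • (A' * A)) =
      (1 + s) ^ Fintype.card n * det (1 + s • (D * D')) := by
  have hA' : 1 + s • (A' * A) = (1 + s) • 1 + F' * (-s • F) := by
    rw [eq_sub_of_add_eq hA, Matrix.mul_smul, smul_sub, add_smul, one_smul, neg_smul]
    abel
  have hD' : (1 + s) • 1 + (-s • F) * F' = 1 + s • (D * D') := by
    rw [Matrix.smul_mul, eq_sub_of_add_eq' hD, smul_sub, add_smul, one_smul, neg_smul]
    abel
  rw [hA', pow_mul_det_smul_one_add_mul_comm hs, hD']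

open scoped ComplexOrder in
theorem re_det_one_add_smul_conjTranspose_mul_pos {s : ℝ} (hs : 0 ≤ s) (A : Matrix p n ℂ) :
    0 < (det (1 + (s : ℂ) • (Aᴴ * A))).re := by
  have hpos : (1 + (s : ℂ) • (Aᴴ * A)).PosDef :=
    PosDef.one.add_posSemidef ((posSemidef_conjTranspose_mul_self A).smul (by exact_mod_cast hs))
  exact (Complex.lt_def.1 hpos.det_pos).1

theorem continuous_log_re_det_one_add_smul_conjTranspose_mul {s : ℝ} (hs : 0 ≤ s) :
    Continuous fun A : Matrix p n ℂ => Real.log (det (1 + (s : ℂ) • (Aᴴ * A))).re := by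
  have hdet : Continuous fun A : Matrix p n ℂ => det (1 + (s : ℂ) • (Aᴴ * A)) := by
    fun_prop
  exact (Complex.continuous_re.comp hdet).log fun A =>
    (re_det_one_add_smul_conjTranspose_mul_pos hs A).ne'

theorem log_re_det_one_add_smul_conjTranspose_mul_eq [Fintype r] (A : Matrix p n ℂ)
    (F : Matrix q n ℂ) (D : Matrix q r ℂ) (hA : Aᴴ * A + Fᴴ * F = 1) (hD : F * Fᴴ + D * Dᴴ = 1)
    {s : ℝ} (hs : 0 ≤ s) :
    Real.log (det (1 + (s : ℂ) • (Aᴴ * A))).re =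
      ((Fintype.card n : ℝ) - Fintype.card q) * Real.log (1 + s) +
        Real.log (det (1 + (s : ℂ) • (D * Dᴴ))).re := by
  have hs' : (1 : ℂ) + s ≠ 0 := by exact_mod_cast (by positivity : (1 : ℝ) + s ≠ 0)
  have hdet : (1 + s) ^ Fintype.card q * (det (1 + (s : ℂ) • (Aᴴ * A))).re =
      (1 + s) ^ Fintype.card n * (det (1 + (s : ℂ) • (D * Dᴴ))).re := by
    simpa only [← Complex.ofReal_one, ← Complex.ofReal_add, ← Complex.ofReal_pow,
      Complex.re_ofReal_mul] using
      congrArg Complex.re (pow_mul_det_one_add_smul_mul_eq _ _ _ _ _ _ hA hD hs')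
  have hD₀ := re_det_one_add_smul_conjTranspose_mul_pos hs Dᴴ
  rw [conjTranspose_conjTranspose] at hD₀
  have hlog := congrArg Real.log hdet
  rw [Real.log_mul (by positivity) (re_det_one_add_smul_conjTranspose_mul_pos hs A).ne',
    Real.log_mul (by positivity) hD₀.ne', Real.log_pow, Real.log_pow] at hlog
  linarith

end Determinant

section UnitaryGroup

variable {n 𝕜 : Type*} [Fintype n] [RCLike 𝕜]

instance : SecondCountableTopology (Matrix n n 𝕜) :=
  inferInstanceAs (SecondCountableTopology (n → n → 𝕜))

variable [DecidableEq n]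

instance : SecondCountableTopology (unitaryGroup n 𝕜) :=
  Topology.IsEmbedding.subtypeVal.secondCountableTopology

instance : CompactSpace (unitaryGroup n 𝕜) := by
  let entrywiseBall : Set (Matrix n n 𝕜) :=
    Set.univ.pi fun _ => Set.univ.pi fun _ => Metric.closedBall 0 1
  have hball : IsCompact entrywiseBall :=
    isCompact_univ_pi fun _ => isCompact_univ_pi fun _ => isCompact_closedBall 0 1
  refine isCompact_iff_compactSpace.mp (hball.of_isClosed_subset isClosed_unitary ?_)
  intro U hU i _ j _
  simpa using entry_norm_bound_of_unitary hU i j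

end UnitaryGroup

end Matrix

open scoped ENNReal in
theorem MeasureTheory.Measure.eq_of_isMulLeftInvariant_of_isMulRightInvariant {G : Type*}
    [Group G] [MeasurableSpace G] [MeasurableMul₂ G] (μ ν : Measure G) [IsProbabilityMeasure μ]
    [IsProbabilityMeasure ν] [μ.IsMulLeftInvariant] [ν.IsMulRightInvariant] : μ = ν := by
  ext t ht
  have hind : Measurable (t.indicator (1 : G → ℝ≥0∞)) := measurable_one.indicator ht
  have hμ (x : G) : ∫⁻ y, t.indicator 1 (x * y) ∂μ = μ t := by
    rw [lintegral_mul_left_eq_self (t.indicator 1) x, lintegral_indicator_one ht]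
  have hν (y : G) : ∫⁻ x, t.indicator 1 (x * y) ∂ν = ν t := by
    rw [lintegral_mul_right_eq_self (t.indicator 1) y, lintegral_indicator_one ht]
  calc μ t = ∫⁻ x, (∫⁻ y, t.indicator 1 (x * y) ∂μ) ∂ν := by
        simp only [hμ, lintegral_const, measure_univ, mul_one]
    _ = ∫⁻ y, (∫⁻ x, t.indicator 1 (x * y) ∂ν) ∂μ :=
        lintegral_lintegral_swap (hind.comp measurable_mul).aemeasurable
    _ = ν t := by simp only [hν, lintegral_const, measure_univ, mul_one]

theorem MeasureTheory.Measure.isInvInvariant_of_isMulLeftInvariant {G : Type*} [Group G]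
    [MeasurableSpace G] [MeasurableMul₂ G] [MeasurableInv G] (μ : Measure G)
    [IsProbabilityMeasure μ] [μ.IsMulLeftInvariant] : μ.IsInvInvariant :=
  have : IsProbabilityMeasure μ.inv := isProbabilityMeasure_map measurable_inv.aemeasurable
  ⟨(eq_of_isMulLeftInvariant_of_isMulRightInvariant μ μ.inv).symm⟩

theorem continuous_jacobiH' (m mt mr : ℕ) : Continuous (jacobiH' m mt mr) :=
  continuous_matrix fun _ _ =>
    (continuous_apply _).comp ((continuous_apply _).comp continuous_subtype_val)

theorem jacobiH'_inv {m mt mr : ℕ} (U : Matrix.unitaryGroup (Fin m) ℂ) :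
    jacobiH' m mt mr U⁻¹ =
      ((U : Matrix (Fin m) (Fin m) ℂ).submatrix (Fin.natAddSub mr) (Fin.natAddSub mt))ᴴ := by
  ext i j
  simp [jacobiH', Fin.natAddSub, Matrix.UnitaryGroup.inv_val, Matrix.star_apply]

theorem log_re_det_one_add_smul_jacobiH_eq {m mt mr : ℕ} (hr : mr ≤ m) (ht : mt ≤ m) {s : ℝ}
    (hs : 0 ≤ s) (U : Matrix.unitaryGroup (Fin m) ℂ) :
    Real.log (det (1 + (s : ℂ) • ((jacobiH m mt mr hr ht U)ᴴ * jacobiH m mt mr hr ht U))).re =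
      ((mt : ℝ) + mr - m) * Real.log (1 + s) +
        Real.log (det (1 + (s : ℂ) • ((jacobiH' m mt mr U⁻¹)ᴴ * jacobiH' m mt mr U⁻¹))).re := by
  have hcols := conjTranspose_mul_self_castLE_add_natAddSub_eq_one hr
    (Matrix.UnitaryGroup.star_mul_self U) (Fin.castLE_injective ht)
  have hrows := mul_conjTranspose_self_castLE_add_natAddSub_eq_one ht (r := Fin.natAddSub mr)
    (Unitary.mul_star_self_of_mem U.2) (Fin.natAddSub_injective mr)
  rw [jacobiH'_inv, conjTranspose_conjTranspose, jacobiH,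
    log_re_det_one_add_smul_conjTranspose_mul_eq _ _ _ hcols hrows hs]
  congr 2
  rw [Fintype.card_fin, Fintype.card_fin, Nat.cast_sub hr]
  ring

theorem jacobi_ergodic_capacity_decomposition_general
    (m mt mr : ℕ)
    (ht : mt ≤ m) (hr : mr ≤ m)
    (μ : Measure (Matrix.unitaryGroup (Fin m) ℂ))
    [μ.IsHaarMeasure] [IsProbabilityMeasure μ]
    (s : ℝ) (hs : 0 ≤ s) :
    ergodicCapacity m mt mr hr ht s μ
      = ((mt : ℝ) + mr - m) * Real.log (1 + s) +
        ∫ U, Real.log ((Matrix.det ((1 : Matrix (Fin (m - mr)) (Fin (m - mr)) ℂ) +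
          (s : ℂ) • ((jacobiH' m mt mr U)ᴴ * jacobiH' m mt mr U))).re) ∂μ := by
  have := μ.isInvInvariant_of_isMulLeftInvariant
  set g : Matrix.unitaryGroup (Fin m) ℂ → ℝ := fun U =>
    Real.log (det (1 + (s : ℂ) • ((jacobiH' m mt mr U)ᴴ * jacobiH' m mt mr U))).re
  have hg : Integrable g μ :=
    ((continuous_log_re_det_one_add_smul_conjTranspose_mul hs).comp
      (continuous_jacobiH' m mt mr)).integrable_of_hasCompactSupport (.of_compactSpace g)
  calc ergodicCapacity m mt mr hr ht s μ
      = ∫ U, (((mt : ℝ) + mr - m) * Real.log (1 + s) + g U⁻¹) ∂μ := by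
        simp only [ergodicCapacity, log_re_det_one_add_smul_jacobiH_eq hr ht hs, g]
    _ = ((mt : ℝ) + mr - m) * Real.log (1 + s) + ∫ U, g U⁻¹ ∂μ := by
        rw [integral_add (integrable_const _) hg.comp_inv, integral_const, probReal_univ, one_smul]
    _ = ((mt : ℝ) + mr - m) * Real.log (1 + s) + ∫ U, g U ∂μ := by
        rw [integral_inv_eq_self g μ]

/-- **Ergodic capacity decomposition when `mt + mr > m`.**
If `mt ≤ m`, `mr ≤ m` and `mt + mr > m`, then for every `s ≥ 0`,
`E[ln det (I + s · Hᴴ H)] = (mt + mr − m) · ln (1 + s) + E[ln det (I + s · H'ᴴ H')]`,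
where `H` is the upper-left `mr × mt` block and `H'` the lower-right
`(m − mt) × (m − mr)` block of a Haar-distributed unitary matrix. -/
theorem jacobi_ergodic_capacity_decomposition
    (m mt mr : ℕ) (hm : 0 < m) (hmt : 0 < mt) (hmr : 0 < mr)
    (ht : mt ≤ m) (hr : mr ≤ m) (hsum : m < mt + mr)
    (μ : Measure (Matrix.unitaryGroup (Fin m) ℂ))
    [μ.IsHaarMeasure] [IsProbabilityMeasure μ]
    (s : ℝ) (hs : 0 ≤ s) :
    ergodicCapacity m mt mr hr ht s μ
      = ((mt : ℝ) + mr - m) * Real.log (1 + s) +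
        ∫ U, Real.log ((Matrix.det ((1 : Matrix (Fin (m - mr)) (Fin (m - mr)) ℂ) +
          (s : ℂ) • ((jacobiH' m mt mr U)ᴴ * jacobiH' m mt mr U))).re) ∂μ :=
  jacobi_ergodic_capacity_decomposition_general m mt mr ht hr μ s hs
end

section
/- Let n be a positive integer, let (Ω, μ) be a probability space, and let A : Ω → (n×n complex matrices) be a random matrix such that A(ω) is Hermitian positive semidefinite for all ω, ω ↦ trace(A(ω)) is integrable, and ω ↦ ln det(I_n + s·A(ω)) is integrable. Then for every s ≥ 0, E[ln det(I_n + s·A)] ≤ n · ln(1 + s·E[trace A]/n). -/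
open MeasureTheory Matrix
open scoped ComplexOrder

/-! Diagonalising `A`, one gets `det (1 + s A) = ∏ᵢ (1 + s λᵢ)` and `trace A = ∑ᵢ λᵢ` with `λᵢ ≥ 0`,
so concavity of `log` over the eigenvalues (AM–GM) gives
`log det (1 + s A) ≤ n log (1 + s trace A / n)`.
Concavity of `log` once more, now as Jensen's inequality for `μ`, moves the expectation inside. -/

open Finset in
theorem Real.sum_log_le_card_mul_log_average {ι : Type*} (t : Finset ι) {z : ι → ℝ}
    (hz : ∀ i ∈ t, 0 < z i) :
    ∑ i ∈ t, Real.log (z i) ≤ #t * Real.log ((∑ i ∈ t, z i) / #t) := by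
  rcases t.eq_empty_or_nonempty with rfl | ht
  · simp
  have hcard : (0 : ℝ) < #t := by exact_mod_cast ht.card_pos
  have jensen := strictConcaveOn_log_Ioi.concaveOn.le_map_sum (t := t) (w := fun _ => (#t : ℝ)⁻¹)
    (p := z) (fun _ _ => by positivity) (by simp [hcard.ne']) hz
  simp only [smul_eq_mul, ← mul_sum] at jensen
  rwa [div_eq_inv_mul, ← inv_mul_le_iff₀ hcard]

namespace Matrix

variable {𝕜 n : Type*} [RCLike 𝕜] [Fintype n] [DecidableEq n] {A : Matrix n n 𝕜}

theorem IsHermitian.det_one_add_smul (hA : A.IsHermitian) (s : ℝ) :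
    det (1 + (s : 𝕜) • A) = ((∏ i, (1 + s * hA.eigenvalues i) : ℝ) : 𝕜) := by
  have h : 1 + (s : 𝕜) • A = Unitary.conjStarAlgAut 𝕜 _ hA.eigenvectorUnitary
      (diagonal fun i => ((1 + s * hA.eigenvalues i : ℝ) : 𝕜)) := by
    conv_lhs => rw [hA.spectral_theorem]
    rw [← map_one (Unitary.conjStarAlgAut 𝕜 _ hA.eigenvectorUnitary), ← map_smul, ← map_add]
    congr 1
    ext i j
    by_cases hij : i = j <;> simp [hij]
  rw [h, det_map, det_diagonal, RCLike.ofReal_prod]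

theorem IsHermitian.re_trace_eq_sum_eigenvalues (hA : A.IsHermitian) :
    RCLike.re A.trace = ∑ i, hA.eigenvalues i := by
  simp [hA.trace_eq_sum_eigenvalues]

theorem PosSemidef.one_le_re_det_one_add_smul (hA : A.PosSemidef) {s : ℝ} (hs : 0 ≤ s) :
    1 ≤ RCLike.re (det (1 + (s : 𝕜) • A)) := by
  rw [hA.isHermitian.det_one_add_smul, RCLike.ofReal_re]
  exact Finset.one_le_prod fun i _ =>
    le_add_of_nonneg_right (mul_nonneg hs (hA.eigenvalues_nonneg i))

theorem PosSemidef.log_det_one_add_smul_le (hA : A.PosSemidef) {s : ℝ} (hs : 0 ≤ s) :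
    Real.log (RCLike.re (det (1 + (s : 𝕜) • A)))
      ≤ Fintype.card n * Real.log (1 + s * RCLike.re A.trace / Fintype.card n) := by
  have hpos : ∀ i ∈ Finset.univ, 0 < 1 + s * hA.isHermitian.eigenvalues i := fun i _ =>
    add_pos_of_pos_of_nonneg one_pos (mul_nonneg hs (hA.eigenvalues_nonneg i))
  rw [hA.isHermitian.det_one_add_smul, RCLike.ofReal_re, Real.log_prod fun i hi => (hpos i hi).ne',
    hA.isHermitian.re_trace_eq_sum_eigenvalues]
  refine (Real.sum_log_le_card_mul_log_average _ hpos).trans_eq ?_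
  rcases eq_or_ne (Fintype.card n) 0 with hn | hn
  · simp [hn]
  · rw [Finset.sum_add_distrib, ← Finset.mul_sum, Finset.sum_const, Finset.card_univ]
    field_simp
    simp

end Matrix

theorem MeasureTheory.Integrable.log_of_one_le {α : Type*} [MeasurableSpace α] {μ : Measure α}
    {f : α → ℝ} (hfi : Integrable f μ) (hf : ∀ᵐ x ∂μ, 1 ≤ f x) :
    Integrable (fun x => Real.log (f x)) μ := by
  refine hfi.mono' (Real.measurable_log.comp_aemeasurable hfi.aemeasurable).aestronglyMeasurable ?_
  filter_upwards [hf] with x hx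
  rw [Real.norm_of_nonneg (Real.log_nonneg hx)]
  linarith [Real.log_le_sub_one_of_pos (zero_lt_one.trans_le hx)]

theorem MeasureTheory.integral_log_le_log_integral {α : Type*} [MeasurableSpace α]
    {μ : Measure α} [IsProbabilityMeasure μ] {f : α → ℝ} (hfi : Integrable f μ)
    (hf : ∀ᵐ x ∂μ, 1 ≤ f x) :
    ∫ x, Real.log (f x) ∂μ ≤ Real.log (∫ x, f x ∂μ) := by
  have hconc : ConcaveOn ℝ (Set.Ici 1) Real.log :=
    strictConcaveOn_log_Ioi.concaveOn.subset (Set.Ici_subset_Ioi.mpr one_pos) (convex_Ici 1)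
  exact hconc.le_map_integral
    (Real.continuousOn_log.mono fun _ hx => (zero_lt_one.trans_le hx).ne') isClosed_Ici hf hfi
    (hfi.log_of_one_le hf)

theorem expected_log_det_le_of_posSemidef_general
    (n : ℕ)
    {Ω : Type*} [MeasurableSpace Ω] (μ : Measure Ω) [IsProbabilityMeasure μ]
    (A : Ω → Matrix (Fin n) (Fin n) ℂ)
    (hA : ∀ ω, (A ω).PosSemidef)
    (s : ℝ) (hs : 0 ≤ s)
    (htr : Integrable (fun ω => (Matrix.trace (A ω)).re) μ) :
    ∫ ω, Real.log ((Matrix.det ((1 : Matrix (Fin n) (Fin n) ℂ) + (s : ℂ) • A ω)).re) ∂μ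
      ≤ n * Real.log (1 + s * (∫ ω, (Matrix.trace (A ω)).re ∂μ) / n) := by
  set g : Ω → ℝ := fun ω => 1 + s * (A ω).trace.re / n
  have hg_one_le : ∀ ω, 1 ≤ g ω := fun ω =>
    le_add_of_nonneg_right (by positivity [(Complex.nonneg_iff.mp (hA ω).trace_nonneg).1])
  have htr_scaled := (htr.const_mul s).div_const (n : ℝ)
  have hg_int : Integrable g μ := (integrable_const 1).add htr_scaled
  have hg_mean : ∫ ω, g ω ∂μ = 1 + s * (∫ ω, (A ω).trace.re ∂μ) / n := by
    rw [integral_add (integrable_const 1) htr_scaled, integral_div, integral_const_mul]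
    simp
  calc ∫ ω, Real.log (det (1 + (s : ℂ) • A ω)).re ∂μ
      ≤ ∫ ω, n * Real.log (g ω) ∂μ := by
        refine integral_mono_of_nonneg (ae_of_all _ fun ω => ?_)
          ((hg_int.log_of_one_le (ae_of_all _ hg_one_le)).const_mul n) (ae_of_all _ fun ω => ?_)
        · exact Real.log_nonneg ((hA ω).one_le_re_det_one_add_smul hs)
        · simpa using (hA ω).log_det_one_add_smul_le hs
    _ = n * ∫ ω, Real.log (g ω) ∂μ := integral_const_mul _ _
    _ ≤ n * Real.log (∫ ω, g ω ∂μ) := by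
        gcongr
        exact integral_log_le_log_integral hg_int (ae_of_all _ hg_one_le)
    _ = n * Real.log (1 + s * (∫ ω, (A ω).trace.re ∂μ) / n) := by rw [hg_mean]

/-- **Jensen's-inequality upper bound for the expected log-determinant.**
Let `(Ω, μ)` be a probability space and `A : Ω → ℂ^{n×n}` a random Hermitian positive
semidefinite matrix with integrable trace and integrable `ln det (I + s·A)`. Then for
every `s ≥ 0`, `E[ln det (I + s·A)] ≤ n · ln (1 + s · E[trace A] / n)`. -/
theorem expected_log_det_le_of_posSemidef
    (n : ℕ) (hn : 0 < n)
    {Ω : Type*} [MeasurableSpace Ω] (μ : Measure Ω) [IsProbabilityMeasure μ]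
    (A : Ω → Matrix (Fin n) (Fin n) ℂ)
    (hA : ∀ ω, (A ω).PosSemidef)
    (s : ℝ) (hs : 0 ≤ s)
    (htr : Integrable (fun ω => (Matrix.trace (A ω)).re) μ)
    (hlog : Integrable (fun ω =>
      Real.log ((Matrix.det ((1 : Matrix (Fin n) (Fin n) ℂ) + (s : ℂ) • A ω)).re)) μ) :
    ∫ ω, Real.log ((Matrix.det ((1 : Matrix (Fin n) (Fin n) ℂ) + (s : ℂ) • A ω)).re) ∂μ
      ≤ n * Real.log (1 + s * (∫ ω, (Matrix.trace (A ω)).re ∂μ) / n) :=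
  expected_log_det_le_of_posSemidef_general n μ A hA s hs htr
end

section
/- Let n be a positive integer, let A be an n×n Hermitian positive semidefinite complex matrix, and let s ≥ 0. Then ln det(I_n + s·A) ≥ n · ln(1 + s·(det A)^{1/n}). -/
/-!
Diagonalising `A` with eigenvalues `μᵢ ≥ 0` gives `det (1 + s • A) = ∏ (1 + s μᵢ)` and
`det A = ∏ μᵢ`, so after taking logarithms the claim becomes
`1 + s (∏ μᵢ)^(1/n) ≤ (∏ (1 + s μᵢ))^(1/n)`: superadditivity of the geometric mean, i.e.
Minkowski's determinant inequality for the commuting pair `1`, `s • A`. Superadditivity follows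
from AM-GM applied to `aᵢ / (aᵢ + bᵢ)` and to `bᵢ / (aᵢ + bᵢ)`, whose means add up to `1`.
-/

open Matrix Finset
open scoped ComplexOrder

namespace Real

theorem geom_mean_le_arith_mean_of_fintype {ι : Type*} [Fintype ι] [Nonempty ι] {z : ι → ℝ}
    (hz : ∀ i, 0 ≤ z i) :
    (∏ i, z i) ^ (Fintype.card ι : ℝ)⁻¹ ≤ (∑ i, z i) / Fintype.card ι := by
  simpa using geom_mean_le_arith_mean univ (fun _ => 1) z (by simp)
    (by simp [Fintype.card_pos]) (fun i _ => hz i)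

theorem geom_mean_add_geom_mean_le {ι : Type*} [Fintype ι] [Nonempty ι] {a b : ι → ℝ}
    (ha : ∀ i, 0 ≤ a i) (hb : ∀ i, 0 ≤ b i) :
    (∏ i, a i) ^ (Fintype.card ι : ℝ)⁻¹ + (∏ i, b i) ^ (Fintype.card ι : ℝ)⁻¹
      ≤ (∏ i, (a i + b i)) ^ (Fintype.card ι : ℝ)⁻¹ := by
  set r : ℝ := (Fintype.card ι : ℝ)⁻¹
  have hr : r ≠ 0 := inv_ne_zero (Nat.cast_ne_zero.mpr Fintype.card_ne_zero)
  by_cases hzero : ∃ i, a i + b i = 0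
  · obtain ⟨i, hi⟩ := hzero
    rw [prod_eq_zero (mem_univ i) (by linarith [ha i, hb i] : a i = 0),
      prod_eq_zero (mem_univ i) (by linarith [ha i, hb i] : b i = 0), zero_rpow hr, add_zero]
    exact rpow_nonneg (prod_nonneg fun i _ => add_nonneg (ha i) (hb i)) r
  push Not at hzero
  have hab : ∀ i, 0 < a i + b i := fun i => (add_nonneg (ha i) (hb i)).lt_of_ne' (hzero i)
  have hc : 0 < ∏ i, (a i + b i) := prod_pos fun i _ => hab i
  have key : ((∏ i, a i) / ∏ i, (a i + b i)) ^ r + ((∏ i, b i) / ∏ i, (a i + b i)) ^ r ≤ 1 :=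
    calc _ = (∏ i, a i / (a i + b i)) ^ r + (∏ i, b i / (a i + b i)) ^ r := by
          rw [prod_div_distrib, prod_div_distrib]
      _ ≤ (∑ i, a i / (a i + b i)) / Fintype.card ι + (∑ i, b i / (a i + b i)) / Fintype.card ι :=
          add_le_add (geom_mean_le_arith_mean_of_fintype fun i => div_nonneg (ha i) (hab i).le)
            (geom_mean_le_arith_mean_of_fintype fun i => div_nonneg (hb i) (hab i).le)
      _ = 1 := by
          rw [← add_div, ← sum_add_distrib]
          simp [← add_div, div_self (hab _).ne', Fintype.card_ne_zero]
  rwa [div_rpow (prod_nonneg fun i _ => ha i) hc.le, div_rpow (prod_nonneg fun i _ => hb i) hc.le,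
    ← add_div, div_le_one (rpow_pos_of_pos hc r)] at key

theorem card_mul_log_one_add_mul_geom_mean_le {ι : Type*} [Fintype ι] [Nonempty ι] {μ : ι → ℝ}
    (hμ : ∀ i, 0 ≤ μ i) {s : ℝ} (hs : 0 ≤ s) :
    Fintype.card ι * log (1 + s * (∏ i, μ i) ^ (Fintype.card ι : ℝ)⁻¹)
      ≤ log (∏ i, (1 + s * μ i)) := by
  have hgeom := geom_mean_add_geom_mean_le (a := 1) (fun _ => zero_le_one)
    (fun i => mul_nonneg hs (hμ i))
  simp only [Pi.one_apply, prod_const_one, one_rpow] at hgeom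
  rw [prod_mul_distrib, prod_const, card_univ,
    mul_rpow (pow_nonneg hs _) (prod_nonneg fun i _ => hμ i),
    pow_rpow_inv_natCast hs Fintype.card_ne_zero] at hgeom
  have hpos : 0 < 1 + s * (∏ i, μ i) ^ (Fintype.card ι : ℝ)⁻¹ :=
    add_pos_of_pos_of_nonneg one_pos (mul_nonneg hs (rpow_nonneg (prod_nonneg fun i _ => hμ i) _))
  have hP : 0 < ∏ i, (1 + s * μ i) := prod_pos fun i _ => by nlinarith [mul_nonneg hs (hμ i)]
  have hn : (Fintype.card ι : ℝ) ≠ 0 := Nat.cast_ne_zero.mpr Fintype.card_ne_zero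
  calc _ ≤ Fintype.card ι * log ((∏ i, (1 + s * μ i)) ^ (Fintype.card ι : ℝ)⁻¹) :=
        mul_le_mul_of_nonneg_left (log_le_log hpos hgeom) (Nat.cast_nonneg _)
    _ = log (∏ i, (1 + s * μ i)) := by
        rw [log_rpow hP, mul_inv_cancel_left₀ hn]

end Real

namespace Matrix.IsHermitian

variable {𝕜 n : Type*} [RCLike 𝕜] [Fintype n] [DecidableEq n] {A : Matrix n n 𝕜}

theorem det_cfc (hA : A.IsHermitian) (f : ℝ → ℝ) :
    (cfc f A).det = ∏ i, (f (hA.eigenvalues i) : 𝕜) := by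
  simp [hA.cfc_eq, IsHermitian.cfc, -Unitary.conjStarAlgAut_apply]

theorem det_one_add_smul_s10 (hA : A.IsHermitian) (s : ℝ) :
    ((1 : Matrix n n 𝕜) + s • A).det = ∏ i, ((1 + s * hA.eigenvalues i : ℝ) : 𝕜) := by
  rw [← cfc_const_one ℝ A, ← cfc_const_mul_id s A, ← cfc_add .., det_cfc hA]

end Matrix.IsHermitian

/-- **Pointwise lower bound for the log-determinant.** For an `n × n` Hermitian positive
semidefinite complex matrix `A` and `s ≥ 0`,
`ln det (I + s·A) ≥ n · ln (1 + s · (det A) ^ (1/n))`. -/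
theorem log_det_one_add_smul_ge
    (n : ℕ) (hn : 0 < n)
    (A : Matrix (Fin n) (Fin n) ℂ) (hA : A.PosSemidef)
    (s : ℝ) (hs : 0 ≤ s) :
    (n : ℝ) * Real.log (1 + s * A.det.re ^ ((1 : ℝ) / n))
      ≤ Real.log ((Matrix.det ((1 : Matrix (Fin n) (Fin n) ℂ) + (s : ℂ) • A)).re) := by
  have : Nonempty (Fin n) := Fin.pos_iff_nonempty.mp hn
  have key := Real.card_mul_log_one_add_mul_geom_mean_le hA.eigenvalues_nonneg hs
  rw [Fintype.card_fin] at key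
  rw [Complex.coe_smul, hA.1.det_one_add_smul_s10, hA.1.det_eq_prod_eigenvalues, one_div,
    ← RCLike.ofReal_prod, ← RCLike.ofReal_prod]
  exact key
end
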